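/- arXiv:math/0602104 — 2 statements merged into one kernel-verified Lean document; each statement's English description precedes it below -/
import Mathlib

section
/- Let x = (a_i)_{i∈I} and y = (b_i)_{i∈I} be elements of A. Then x and y are free over D in (A, E) if and only if, for every i ∈ I, the elements a_i and b_i are free in the noncommutative probability space (A_i, φ_i). -/
/-- The diagonal embedding `ι : (I → ℂ) → Π i, A i`, `ι d = (d i • 1)_{i}`. -/
noncomputable def diag {I : Type*} (A : I → Type*) [∀ i, Ring (A i)]
    [∀ i, Algebra ℂ (A i)] (d : I → ℂ) : ∀ i, A i :=
  fun i => d i • (1 : A i)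

/-- The componentwise conditional expectation `E : Π i, A i → (I → ℂ)`. -/
noncomputable def condExp {I : Type*} {A : I → Type*} [∀ i, Ring (A i)]
    [∀ i, Algebra ℂ (A i)] (φ : ∀ i, A i →ₗ[ℂ] ℂ) (x : ∀ i, A i) : I → ℂ :=
  fun i => φ i (x i)

/-- Two subalgebras `B₁, B₂` of `A = Π i, A i` are free over `D` with respect to
`E = condExp φ`: every alternating product of `E`-centered elements is `E`-centered. -/
def FreeOverD {I : Type*} {A : I → Type*} [∀ i, Ring (A i)] [∀ i, Algebra ℂ (A i)]
    (φ : ∀ i, A i →ₗ[ℂ] ℂ) (B₁ B₂ : Subalgebra ℂ (∀ i, A i)) : Prop :=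
  ∀ (n : ℕ), 1 ≤ n → ∀ (y : Fin n → ∀ i, A i) (c : Fin n → Bool),
    (∀ k, y k ∈ (if c k then B₁ else B₂)) →
    (∀ (k : Fin n) (h : (k : ℕ) + 1 < n), c k ≠ c ⟨(k : ℕ) + 1, h⟩) →
    (∀ k, condExp φ (y k) = 0) →
    condExp φ (List.ofFn y).prod = 0

/-- Two elements `x, y ∈ A` are free over `D` if the unital subalgebras generated by
`{x} ∪ ι(D)` and `{y} ∪ ι(D)` are free over `D`. -/
def ElemFreeOverD {I : Type*} {A : I → Type*} [∀ i, Ring (A i)] [∀ i, Algebra ℂ (A i)]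
    (φ : ∀ i, A i →ₗ[ℂ] ℂ) (x y : ∀ i, A i) : Prop :=
  FreeOverD φ (Algebra.adjoin ℂ ({x} ∪ Set.range (diag A)))
    (Algebra.adjoin ℂ ({y} ∪ Set.range (diag A)))

/-- Two unital subalgebras of a noncommutative probability space `(B, φ)` are free. -/
def FreeSubalgebras {B : Type*} [Ring B] [Algebra ℂ B] (φ : B →ₗ[ℂ] ℂ)
    (B₁ B₂ : Subalgebra ℂ B) : Prop :=
  ∀ (n : ℕ), 1 ≤ n → ∀ (y : Fin n → B) (c : Fin n → Bool),
    (∀ k, y k ∈ (if c k then B₁ else B₂)) →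
    (∀ (k : Fin n) (h : (k : ℕ) + 1 < n), c k ≠ c ⟨(k : ℕ) + 1, h⟩) →
    (∀ k, φ (y k) = 0) →
    φ (List.ofFn y).prod = 0

/-- Two elements of a noncommutative probability space `(B, φ)` are free if the unital
subalgebras they generate are free. -/
def FreePair {B : Type*} [Ring B] [Algebra ℂ B] (φ : B →ₗ[ℂ] ℂ) (a b : B) : Prop :=
  FreeSubalgebras φ (Algebra.adjoin ℂ {a}) (Algebra.adjoin ℂ {b})

/-!
Both directions are coordinatewise. Evaluation at `i` maps the algebra generated by `x` and the
diagonal into the algebra generated by `x i`, and `E` followed by evaluation at `i` is `φ i`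
followed by evaluation at `i`; so freeness in every `(A i, φ i)` gives freeness over `D`.
Conversely, an element `b` of the algebra generated by `x i` lifts to `Pi.single i b`, which lies in
the algebra generated by `x` and the diagonal (it is the diagonal idempotent `ι (Pi.single i 1)`
times `p(x)` when `b = p(x i)`), is `E`-centered iff `φ i b = 0`, and alternating products of such
lifts are lifts of the alternating products.
-/

open Polynomial

section

variable {I : Type*} {A : I → Type*} [∀ i, Ring (A i)] [∀ i, Algebra ℂ (A i)]

theorem diag_single [DecidableEq I] (i : I) : diag A (Pi.single i 1) = Pi.single i 1 := by
  ext j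
  by_cases hj : j = i
  · subst hj
    simp [diag]
  · simp [diag, hj]

theorem condExp_single [DecidableEq I] (φ : ∀ i, A i →ₗ[ℂ] ℂ) (i : I) (b : A i) :
    condExp φ (Pi.single i b) = Pi.single i (φ i b) :=
  funext (Pi.apply_single (fun j => φ j) (fun j => map_zero (φ j)) i b)

theorem condExp_list_prod_apply (φ : ∀ i, A i →ₗ[ℂ] ℂ) (l : List (∀ i, A i)) (i : I) :
    condExp φ l.prod i = φ i (l.map fun z => z i).prod := by
  rw [condExp, Pi.list_prod_apply]

theorem map_evalAlgHom_adjoin_le (w : ∀ i, A i) (i : I) :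
    (Algebra.adjoin ℂ ({w} ∪ Set.range (diag A))).map (Pi.evalAlgHom ℂ A i)
      ≤ Algebra.adjoin ℂ {w i} := by
  rw [AlgHom.map_adjoin]
  refine Algebra.adjoin_le ?_
  rintro _ ⟨s, hs | ⟨d, rfl⟩, rfl⟩
  · rw [Set.mem_singleton_iff.1 hs]
    exact Algebra.subset_adjoin rfl
  · simpa [diag, Algebra.algebraMap_eq_smul_one] using
      Subalgebra.algebraMap_mem (Algebra.adjoin ℂ {w i}) (d i)

theorem single_mem_adjoin [DecidableEq I] {w : ∀ i, A i} {i : I} {b : A i}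
    (hb : b ∈ Algebra.adjoin ℂ {w i}) :
    Pi.single i b ∈ Algebra.adjoin ℂ ({w} ∪ Set.range (diag A)) := by
  rw [Algebra.adjoin_singleton_eq_range_aeval] at hb
  obtain ⟨p, rfl⟩ := hb
  have hlift : Pi.single i (aeval (w i) p) = diag A (Pi.single i 1) * aeval w p := by
    rw [diag_single, ← Pi.single_mul_left, one_mul, aeval_pi_apply₂]
  change Pi.single i (aeval (w i) p) ∈ _
  rw [hlift]
  refine Subalgebra.mul_mem _ (Algebra.subset_adjoin (Or.inr ⟨_, rfl⟩)) ?_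
  exact Algebra.adjoin_mono Set.subset_union_left (aeval_mem_adjoin_singleton ℂ w)

theorem FreeOverD.of_forall_freeSubalgebras (φ : ∀ i, A i →ₗ[ℂ] ℂ)
    {B₁ B₂ : Subalgebra ℂ (∀ i, A i)} {C₁ C₂ : ∀ i, Subalgebra ℂ (A i)}
    (h₁ : ∀ i, B₁.map (Pi.evalAlgHom ℂ A i) ≤ C₁ i)
    (h₂ : ∀ i, B₂.map (Pi.evalAlgHom ℂ A i) ≤ C₂ i)
    (h : ∀ i, FreeSubalgebras (φ i) (C₁ i) (C₂ i)) : FreeOverD φ B₁ B₂ := by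
  intro n hn z c hz hc hcent
  funext i
  have hmem : ∀ k, z k i ∈ if c k then C₁ i else C₂ i := by
    intro k
    have hzk := hz k
    split_ifs at hzk ⊢
    exacts [h₁ i (Subalgebra.mem_map.2 ⟨_, hzk, rfl⟩),
      h₂ i (Subalgebra.mem_map.2 ⟨_, hzk, rfl⟩)]
  rw [condExp_list_prod_apply, List.map_ofFn]
  exact h i n hn (fun k => z k i) c hmem hc fun k => congrFun (hcent k) i

theorem FreeOverD.freeSubalgebras [DecidableEq I] {φ : ∀ i, A i →ₗ[ℂ] ℂ}
    {B₁ B₂ : Subalgebra ℂ (∀ i, A i)} {i : I} {C₁ C₂ : Subalgebra ℂ (A i)}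
    (h₁ : ∀ b ∈ C₁, Pi.single i b ∈ B₁) (h₂ : ∀ b ∈ C₂, Pi.single i b ∈ B₂)
    (h : FreeOverD φ B₁ B₂) : FreeSubalgebras (φ i) C₁ C₂ := by
  intro n hn b c hb hc hcent
  have hmem : ∀ k, Pi.single i (b k) ∈ if c k then B₁ else B₂ := by
    intro k
    have hbk := hb k
    split_ifs at hbk ⊢
    exacts [h₁ _ hbk, h₂ _ hbk]
  have hcent' : ∀ k, condExp φ (Pi.single i (b k)) = 0 := by
    simp [condExp_single, hcent]
  have := congrFun (h n hn _ c hmem hc hcent') i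
  simpa [condExp_list_prod_apply, List.map_ofFn, Function.comp_def] using this

end

theorem elemFreeOverD_iff_forall_freePair_general
    {I : Type*} {A : I → Type*} [∀ i, Ring (A i)]
    [∀ i, Algebra ℂ (A i)] (φ : ∀ i, A i →ₗ[ℂ] ℂ)
    (x y : ∀ i, A i) :
    ElemFreeOverD φ x y ↔ ∀ i, FreePair (φ i) (x i) (y i) := by
  classical
  exact ⟨fun h _ => h.freeSubalgebras (fun _ => single_mem_adjoin) (fun _ => single_mem_adjoin),
    FreeOverD.of_forall_freeSubalgebras φ (map_evalAlgHom_adjoin_le x)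
      (map_evalAlgHom_adjoin_le y)⟩

/-- `x = (a_i)` and `y = (b_i)` are free over `D` in `(A, E)` iff
for every `i`, `a_i` and `b_i` are free in `(A_i, φ_i)`. -/
theorem elemFreeOverD_iff_forall_freePair
    {I : Type*} [Nonempty I] {A : I → Type*} [∀ i, Ring (A i)]
    [∀ i, Algebra ℂ (A i)] (φ : ∀ i, A i →ₗ[ℂ] ℂ) (hφ : ∀ i, φ i 1 = 1)
    (x y : ∀ i, A i) :
    ElemFreeOverD φ x y ↔ ∀ i, FreePair (φ i) (x i) (y i) :=
  elemFreeOverD_iff_forall_freePair_general φ x y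
end

section
/- For each i ∈ I let A_i' = {x ∈ A : x(k) = 0 for all k ≠ i} be the embedded copy of A_i in A, and let B_i be the unital subalgebra of A generated by A_i' ∪ ι(D). Then the family (B_i)_{i∈I} is mutually free over D in (A, E): for every n ≥ 1 and every sequence y₁, ..., yₙ with y_k ∈ B_{j_k}, consecutive indices j_k ≠ j_{k+1}, and E(y_k) = 0 for all k, one has E(y₁⋯yₙ) = 0. -/
/-- For `i ∈ I`, `B_i` is the unital subalgebra of `A` generated by the embedded copy
`A_i' = {x ∈ A : x k = 0 for all k ≠ i}` of `A_i` together with the diagonal `ι(D)`. -/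
def embeddedAlg {I : Type*} (A : I → Type*) [∀ i, Ring (A i)] [∀ i, Algebra ℂ (A i)]
    (i : I) : Subalgebra ℂ (∀ k, A k) :=
  Algebra.adjoin ℂ
    ({x : ∀ k, A k | ∀ k, k ≠ i → x k = 0} ∪ Set.range (diag A))

/-!
Every element of `B_i` is a scalar in each coordinate `k ≠ i`, since this holds for the
generators and is preserved by the algebra operations. A scalar `c • 1` is `φ_k`-centered
only if `c = 0`, so an `E`-centered element of `B_i` vanishes off the coordinate `i`.
Consecutive factors `y₁ ∈ B_{j₁}`, `y₂ ∈ B_{j₂}` with `j₁ ≠ j₂` therefore have disjoint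
supports, whence `y₁ y₂ = 0` and the whole product is `0`.
-/

section ScalarAwayFrom

variable {I R : Type*} [CommSemiring R] (A : I → Type*) [∀ i, Semiring (A i)]
  [∀ i, Algebra R (A i)]

def scalarAwayFrom (i : I) : Subalgebra R (∀ k, A k) :=
  ⨅ (k) (_ : k ≠ i), (⊥ : Subalgebra R (A k)).comap (Pi.evalAlgHom R A k)

variable {A}

theorem mem_scalarAwayFrom {i : I} {x : ∀ k, A k} :
    x ∈ scalarAwayFrom (R := R) A i ↔ ∀ k, k ≠ i → x k ∈ (⊥ : Subalgebra R (A k)) := by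
  simp only [scalarAwayFrom, Algebra.mem_iInf, Subalgebra.mem_comap, Pi.evalAlgHom_apply]

end ScalarAwayFrom

theorem eq_zero_of_mem_bot_of_map_eq_zero {R B : Type*} [CommSemiring R] [Semiring B]
    [Algebra R B] {φ : B →ₗ[R] R} (hφ : φ 1 = 1) {x : B} (hx : x ∈ (⊥ : Subalgebra R B))
    (hφx : φ x = 0) : x = 0 := by
  obtain ⟨c, rfl⟩ := Algebra.mem_bot.mp hx
  rw [Algebra.algebraMap_eq_smul_one, map_smul, hφ, smul_eq_mul, mul_one] at hφx
  rw [hφx, map_zero]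

section EmbeddedAlg

variable {I : Type*} {A : I → Type*} [∀ i, Ring (A i)] [∀ i, Algebra ℂ (A i)]

theorem embeddedAlg_le_scalarAwayFrom (i : I) : embeddedAlg A i ≤ scalarAwayFrom A i := by
  refine Algebra.adjoin_le fun x hx => mem_scalarAwayFrom.mpr fun k hk => ?_
  rcases hx with hx | ⟨d, rfl⟩
  · rw [hx k hk]
    exact Subalgebra.zero_mem _
  · exact Algebra.mem_bot.mpr ⟨d k, Algebra.algebraMap_eq_smul_one (A := A k) (d k)⟩

theorem apply_eq_zero_of_mem_embeddedAlg_of_condExp_eq_zero {φ : ∀ i, A i →ₗ[ℂ] ℂ}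
    (hφ : ∀ i, φ i 1 = 1) {i : I} {y : ∀ k, A k} (hy : y ∈ embeddedAlg A i)
    (hEy : condExp φ y = 0) {k : I} (hk : k ≠ i) : y k = 0 :=
  eq_zero_of_mem_bot_of_map_eq_zero (hφ k)
    (mem_scalarAwayFrom.mp (embeddedAlg_le_scalarAwayFrom i hy) k hk) (congrFun hEy k)

end EmbeddedAlg

theorem embedded_copies_mutually_free_over_D_general
    {I : Type*} {A : I → Type*} [∀ i, Ring (A i)]
    [∀ i, Algebra ℂ (A i)] (φ : ∀ i, A i →ₗ[ℂ] ℂ) (hφ : ∀ i, φ i 1 = 1) :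
    ∀ (n : ℕ), 1 ≤ n → ∀ (y : Fin n → ∀ i, A i) (j : Fin n → I),
      (∀ k, y k ∈ embeddedAlg A (j k)) →
      (∀ (k : Fin n) (h : (k : ℕ) + 1 < n), j k ≠ j ⟨(k : ℕ) + 1, h⟩) →
      (∀ k, condExp φ (y k) = 0) →
      condExp φ (List.ofFn y).prod = 0 := by
  intro n hn y j hmem hneq hE
  have hvanish (m : Fin n) {k : I} (hk : k ≠ j m) : y m k = 0 :=
    apply_eq_zero_of_mem_embeddedAlg_of_condExp_eq_zero hφ (hmem m) (hE m) hk
  match n, hn with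
  | 1, _ => simpa only [List.ofFn_succ, List.ofFn_zero, List.prod_singleton] using hE 0
  | n + 2, _ =>
    have hj : j 0 ≠ j 1 := hneq 0 (by simp)
    have hy01 : y 0 * y 1 = 0 := funext fun k => by
      by_cases hk : k = j 0
      · rw [Pi.mul_apply, hvanish 1 (hk ▸ hj), mul_zero, Pi.zero_apply]
      · rw [Pi.mul_apply, hvanish 0 hk, zero_mul, Pi.zero_apply]
    rw [List.ofFn_succ, List.ofFn_succ, List.prod_cons, List.prod_cons, ← mul_assoc]
    simp only [Fin.succ_zero_eq_one, hy01, zero_mul]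
    exact funext fun k => map_zero (φ k)

/-- the family `(B_i)_{i ∈ I}` of embedded copies (together with the
diagonal) is mutually free over `D` in `(A, E)`: every alternating product of
`E`-centered elements is `E`-centered. -/
theorem embedded_copies_mutually_free_over_D
    {I : Type*} [Nonempty I] {A : I → Type*} [∀ i, Ring (A i)]
    [∀ i, Algebra ℂ (A i)] (φ : ∀ i, A i →ₗ[ℂ] ℂ) (hφ : ∀ i, φ i 1 = 1) :
    ∀ (n : ℕ), 1 ≤ n → ∀ (y : Fin n → ∀ i, A i) (j : Fin n → I),
      (∀ k, y k ∈ embeddedAlg A (j k)) →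
      (∀ (k : Fin n) (h : (k : ℕ) + 1 < n), j k ≠ j ⟨(k : ℕ) + 1, h⟩) →
      (∀ k, condExp φ (y k) = 0) →
      condExp φ (List.ofFn y).prod = 0 :=
  embedded_copies_mutually_free_over_D_general φ hφ
end
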